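/- Let W be a Morse sequence on K. Then for every p, ∂_p ∘ ∧̃_p = ∧̃_{p−1} ∘ ∂̂_p and δ_p ∘ ∨̃_p = ∨̃_{p+1} ∘ δ̂_p; that is, the extension map ∧̃ is a chain map from the critical complex (Ŵ[p], ∂̂_p) to (K[p], ∂_p), and the coextension map ∨̃ is a cochain map from (Ŵ[p], δ̂_p) to (K[p], δ_p). -/
import Mathlib


/-! ## Basic notions: simplicial complexes, collapses, expansions, fillings -/

variable {V : Type*} [DecidableEq V]

/-- A (finite) simplicial complex: a finite collection of nonempty finite sets that is
closed under taking nonempty subsets. -/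
def IsComplex (K : Finset (Finset V)) : Prop :=
  ∀ τ ∈ K, τ.Nonempty ∧ ∀ σ, σ ⊆ τ → σ.Nonempty → σ ∈ K

/-- `ν` is a facet (inclusion-maximal face) of `K`. -/
def IsFacet (K : Finset (Finset V)) (ν : Finset V) : Prop :=
  ν ∈ K ∧ ∀ ρ ∈ K, ν ⊆ ρ → ρ = ν

/-- `(σ, τ)` is a free pair for `K`: `σ ⊊ τ` and `τ` is the only face of `K`
strictly containing `σ`. -/
def IsFreePair (K : Finset (Finset V)) (σ τ : Finset V) : Prop :=
  σ ∈ K ∧ τ ∈ K ∧ σ ⊂ τ ∧ ∀ ρ ∈ K, σ ⊂ ρ → ρ = τ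

/-- `K` is an elementary expansion of `L` (equivalently, `L` is an elementary collapse
of `K`): `L = K \ {σ, τ}` for some free pair `(σ, τ)` of `K`. -/
def ElemExpansion (L K : Finset (Finset V)) : Prop :=
  ∃ σ τ, IsFreePair K σ τ ∧ L = K \ {σ, τ}

/-- `K` is an elementary filling of `L` (equivalently, `L` is an elementary perforation
of `K`): `L = K \ {ν}` for some facet `ν` of `K`. -/
def ElemFilling (L K : Finset (Finset V)) : Prop :=
  ∃ ν, IsFacet K ν ∧ L = K \ {ν}

/-- `L` is an elementary collapse of `K`. -/
def ElemCollapse (K L : Finset (Finset V)) : Prop :=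
  ∃ σ τ, IsFreePair K σ τ ∧ L = K \ {σ, τ}

/-- `K` collapses onto `L`: there is a sequence of elementary collapses from `K` to `L`. -/
def CollapsesOnto (K L : Finset (Finset V)) : Prop :=
  Relation.ReflTransGen ElemCollapse K L

/-! ## Morse sequences -/

/-- A Morse sequence `⟨∅ = K₀, …, K_k = K⟩`: each `K_i` is a simplicial complex that is
an elementary expansion or an elementary filling of `K_{i-1}`. -/
structure MorseSeq (V : Type*) [DecidableEq V] where
  k : ℕ
  seq : ℕ → Finset (Finset V)
  cpx : ∀ i ≤ k, IsComplex (seq i)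
  init : seq 0 = ∅
  step : ∀ i, 1 ≤ i → i ≤ k → ElemExpansion (seq (i - 1)) (seq i) ∨ ElemFilling (seq (i - 1)) (seq i)

/-- The simplicial complex `K = K_k` on which the Morse sequence lives. -/
def MorseSeq.cplx (W : MorseSeq V) : Finset (Finset V) := W.seq W.k

/-- A face added by a filling step: a critical face of `W`. -/
def MorseSeq.Critical (W : MorseSeq V) (ν : Finset V) : Prop :=
  ∃ i, 1 ≤ i ∧ i ≤ W.k ∧ W.seq i \ W.seq (i - 1) = {ν}

/-- `(σ, τ)` is a regular pair for `W`: the two faces are added together by an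
elementary expansion step. -/
def MorseSeq.Regular (W : MorseSeq V) (σ τ : Finset V) : Prop :=
  ∃ i, 1 ≤ i ∧ i ≤ W.k ∧ σ ⊂ τ ∧ W.seq i \ W.seq (i - 1) = {σ, τ}

/-- `σ` is lower regular for `W`. -/
def MorseSeq.LowerRegular (W : MorseSeq V) (σ : Finset V) : Prop := ∃ τ, W.Regular σ τ

/-- `τ` is upper regular for `W`. -/
def MorseSeq.UpperRegular (W : MorseSeq V) (τ : Finset V) : Prop := ∃ σ, W.Regular σ τ

/-! ## Chains modulo 2 -/

/-- The boundary `∂(σ)` of a simplex: the chain of its (nonempty) codimension-one faces. -/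
def bd (σ : Finset V) : Finset (Finset V) :=
  σ.powerset.filter fun ρ => ρ.Nonempty ∧ ρ.card + 1 = σ.card

/-- The coboundary `δ(σ)` of a simplex in `K`: the chain of faces of `K` of
codimension one over `σ` containing `σ`. -/
def cobd (K : Finset (Finset V)) (σ : Finset V) : Finset (Finset V) :=
  K.filter fun τ => σ ⊆ τ ∧ σ.card + 1 = τ.card

/-- Mod-2 linear extension: `chainSum c f` is the sum (symmetric difference) of
the chains `f σ` over `σ ∈ c`; an element belongs to it iff it belongs to an odd
number of the `f σ`. -/
def chainSum (c : Finset (Finset V)) (f : Finset V → Finset (Finset V)) : Finset (Finset V) :=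
  (c.biUnion f).filter fun ν => (c.filter fun σ => ν ∈ f σ).card % 2 = 1

/-- `c` is a `p`-chain of `K`: a set of `p`-simplices of `K`. -/
def IsChainOf (K : Finset (Finset V)) (p : ℕ) (c : Finset (Finset V)) : Prop :=
  ∀ ν ∈ c, ν ∈ K ∧ ν.card = p + 1

/-- `c` is a chain of critical `p`-simplices of `W` (an element of `Ŵ[p]`). -/
def IsCritChain (W : MorseSeq V) (p : ℕ) (c : Finset (Finset V)) : Prop :=
  ∀ ν ∈ c, W.Critical ν ∧ ν.card = p + 1

/-! ## Frames, reference and coreference maps -/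

/-- A frame on `W`: it assigns to each `p`-simplex of `K` a chain of critical
`p`-simplices of `W`. -/
def IsFrame (W : MorseSeq V) (Υ : Finset V → Finset (Finset V)) : Prop :=
  ∀ ν ∈ W.cplx, ∀ μ ∈ Υ ν, W.Critical μ ∧ μ.card = ν.card

/-- `Λ` is the reference map of `W`: a frame with `Λ(ν) = ν` for critical `ν`, and
`Λ(τ) = 0`, `Λ(∂τ) = 0` for upper regular `τ`. -/
def IsRefMap (W : MorseSeq V) (Λ : Finset V → Finset (Finset V)) : Prop :=
  IsFrame W Λ ∧ (∀ ν, W.Critical ν → Λ ν = {ν}) ∧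
    ∀ τ, W.UpperRegular τ → Λ τ = ∅ ∧ chainSum (bd τ) Λ = ∅

/-- `Λ` is the coreference map of `W`: a frame with `Λ(ν) = ν` for critical `ν`, and
`Λ(σ) = 0`, `Λ(δσ) = 0` for lower regular `σ`. -/
def IsCorefMap (W : MorseSeq V) (Λ : Finset V → Finset (Finset V)) : Prop :=
  IsFrame W Λ ∧ (∀ ν, W.Critical ν → Λ ν = {ν}) ∧
    ∀ σ, W.LowerRegular σ → Λ σ = ∅ ∧ chainSum (cobd W.cplx σ) Λ = ∅

/-- The extension map `∧̃` of `W` (defined from the coreference map `Vee`):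
`∧̃(κ) = {ν ∈ K | κ ∈ ∨(ν)}`. -/
def extMap (W : MorseSeq V) (Vee : Finset V → Finset (Finset V)) (κ : Finset V) :
    Finset (Finset V) :=
  W.cplx.filter fun ν => κ ∈ Vee ν

/-- The coextension map `∨̃` of `W` (defined from the reference map `Λ`):
`∨̃(κ) = {ν ∈ K | κ ∈ ∧(ν)}`. -/
def coextMap (W : MorseSeq V) (Λ : Finset V → Finset (Finset V)) (κ : Finset V) :
    Finset (Finset V) :=
  W.cplx.filter fun ν => κ ∈ Λ ν

section Dev
variable {V : Type*} [DecidableEq V]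

/-- coefficient of a face in a mod-2 chain -/
def cf (X : Finset (Finset V)) (ν : Finset V) : ZMod 2 := if ν ∈ X then 1 else 0

@[simp] lemma cf_empty (ν : Finset V) : cf (∅ : Finset (Finset V)) ν = 0 := rfl

lemma cf_singleton (a ν : Finset V) : cf ({a} : Finset (Finset V)) ν = if ν = a then 1 else 0 := by
  simp [cf]

lemma mem_chainSum {c : Finset (Finset V)} {f : Finset V → Finset (Finset V)} {ν : Finset V} :
    ν ∈ chainSum c f ↔ (c.filter fun σ => ν ∈ f σ).card % 2 = 1 := by
  unfold chainSum
  rw [Finset.mem_filter]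
  constructor
  · exact fun h => h.2
  · intro h
    refine ⟨?_, h⟩
    have hpos : 0 < (c.filter fun σ => ν ∈ f σ).card := by omega
    obtain ⟨σ, hσ⟩ := Finset.card_pos.mp hpos
    rw [Finset.mem_filter] at hσ
    exact Finset.mem_biUnion.mpr ⟨σ, hσ.1, hσ.2⟩

lemma natCast_zmod2 (n : ℕ) : (n : ZMod 2) = if n % 2 = 1 then 1 else 0 := by
  rw [← ZMod.natCast_mod n 2]
  rcases Nat.mod_two_eq_zero_or_one n with h | h <;> simp [h]

lemma cf_chainSum (c : Finset (Finset V)) (f : Finset V → Finset (Finset V)) (ν : Finset V) :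
    cf (chainSum c f) ν = ∑ σ ∈ c, cf (f σ) ν := by
  have : (∑ σ ∈ c, cf (f σ) ν) = ((c.filter fun σ => ν ∈ f σ).card : ZMod 2) := by
    rw [Finset.card_filter]
    push_cast
    exact Finset.sum_congr rfl fun σ _ => by by_cases h : ν ∈ f σ <;> simp [cf, h]
  rw [this, natCast_zmod2, cf]
  by_cases h : ν ∈ chainSum c f
  · rw [if_pos h, if_pos (mem_chainSum.mp h)]
  · rw [if_neg h, if_neg (fun hh => h (mem_chainSum.mpr hh))]

lemma eq_of_cf {X Y : Finset (Finset V)} (h : ∀ ν, cf X ν = cf Y ν) : X = Y := by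
  ext ν
  have := h ν
  unfold cf at this
  by_cases hX : ν ∈ X <;> by_cases hY : ν ∈ Y <;> simp_all

lemma sum_subset_cf {S T : Finset (Finset V)} (hST : S ⊆ T) (g : Finset V → ZMod 2) :
    ∑ e ∈ S, g e = ∑ e ∈ T, cf S e * g e := by
  have : ∀ e, cf S e * g e = if e ∈ S then g e else 0 := by
    intro e; by_cases h : e ∈ S <;> simp [cf, h]
  simp_rw [this]
  rw [Finset.sum_ite_mem, Finset.inter_eq_right.mpr hST]

end Dev
section Dev2
variable {V : Type*} [DecidableEq V]

/-- the step at which a face is added -/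
def AddedAt (W : MorseSeq V) (ρ : Finset V) (i : ℕ) : Prop :=
  1 ≤ i ∧ i ≤ W.k ∧ ρ ∈ W.seq i ∧ ρ ∉ W.seq (i - 1)

lemma step_subset (W : MorseSeq V) {i : ℕ} (h1 : 1 ≤ i) (h2 : i ≤ W.k) :
    W.seq (i - 1) ⊆ W.seq i := by
  rcases W.step i h1 h2 with ⟨σ, τ, _, hL⟩ | ⟨ν, _, hL⟩ <;>
    · rw [hL]; exact Finset.sdiff_subset

lemma seq_mono (W : MorseSeq V) : ∀ {i j : ℕ}, i ≤ j → j ≤ W.k → W.seq i ⊆ W.seq j := by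
  intro i j hij hj
  induction j with
  | zero => simpa [Nat.le_zero.mp hij] using Finset.Subset.refl _
  | succ n ih =>
    rcases Nat.lt_or_ge i (n+1) with h | h
    · have h1 : W.seq i ⊆ W.seq n := ih (by omega) (by omega)
      have h2 : W.seq n ⊆ W.seq (n+1) := by
        have := step_subset W (i := n+1) (by omega) hj
        simpa using this
      exact h1.trans h2
    · have : i = n+1 := by omega
      simp [this]

lemma step_diff (W : MorseSeq V) {i : ℕ} (h1 : 1 ≤ i) (h2 : i ≤ W.k) :
    (∃ ν, IsFacet (W.seq i) ν ∧ W.seq i \ W.seq (i-1) = {ν}) ∨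
    (∃ σ τ, IsFreePair (W.seq i) σ τ ∧ W.seq i \ W.seq (i-1) = {σ, τ}) := by
  rcases W.step i h1 h2 with ⟨σ, τ, hfp, hL⟩ | ⟨ν, hfc, hL⟩
  · right
    refine ⟨σ, τ, hfp, ?_⟩
    rw [hL, Finset.sdiff_sdiff_self_left, Finset.inter_eq_right]
    intro x hx
    rcases Finset.mem_insert.mp hx with h | h
    · exact h ▸ hfp.1
    · exact (Finset.mem_singleton.mp h) ▸ hfp.2.1
  · left
    refine ⟨ν, hfc, ?_⟩
    rw [hL, Finset.sdiff_sdiff_self_left, Finset.inter_eq_right]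
    simpa using hfc.1

lemma exists_addedAt_aux (W : MorseSeq V) :
    ∀ j, j ≤ W.k → ∀ ρ ∈ W.seq j, ∃ i, i ≤ j ∧ AddedAt W ρ i := by
  intro j
  induction j with
  | zero => intro _ ρ hρ; rw [W.init] at hρ; exact absurd hρ (Finset.notMem_empty ρ)
  | succ n ih =>
    intro hn ρ hρ
    by_cases h : ρ ∈ W.seq n
    · obtain ⟨i, hi, ha⟩ := ih (by omega) ρ h
      exact ⟨i, by omega, ha⟩
    · exact ⟨n+1, le_refl _, by omega, hn, hρ, by simpa using h⟩

lemma exists_addedAt (W : MorseSeq V) {ρ : Finset V} (hρ : ρ ∈ W.cplx) :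
    ∃ i, AddedAt W ρ i := by
  obtain ⟨i, _, ha⟩ := exists_addedAt_aux W W.k (le_refl _) ρ hρ
  exact ⟨i, ha⟩

lemma critical_mem (W : MorseSeq V) {ν : Finset V} (h : W.Critical ν) : ν ∈ W.cplx := by
  obtain ⟨i, h1, h2, hd⟩ := h
  have : ν ∈ W.seq i \ W.seq (i-1) := by rw [hd]; exact Finset.mem_singleton_self ν
  exact seq_mono W h2 (le_refl _) (Finset.mem_sdiff.mp this).1

lemma freePair_card {K : Finset (Finset V)} {σ τ : Finset V}
    (hK : IsComplex K) (h : IsFreePair K σ τ) : σ.card + 1 = τ.card := by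
  obtain ⟨hσ, hτ, hst, hfree⟩ := h
  by_contra hne
  obtain ⟨x, hxτ, hxσ⟩ := Finset.exists_of_ssubset hst
  have hρK : insert x σ ∈ K := by
    refine (hK τ hτ).2 _ ?_ ⟨x, Finset.mem_insert_self x σ⟩
    exact Finset.insert_subset hxτ hst.subset
  have hcard : (insert x σ).card = σ.card + 1 := Finset.card_insert_of_notMem hxσ
  have : insert x σ = τ := hfree _ hρK (Finset.ssubset_insert hxσ)
  rw [this] at hcard; omega

/-- classification of a face added at step i -/
lemma addedAt_cases (W : MorseSeq V) {ρ : Finset V} {i : ℕ} (h : AddedAt W ρ i) :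
    (W.seq i \ W.seq (i-1) = {ρ}) ∨
    (∃ σ τ, IsFreePair (W.seq i) σ τ ∧ W.seq i \ W.seq (i-1) = {σ, τ} ∧ (ρ = σ ∨ ρ = τ)) := by
  obtain ⟨h1, h2, h3, h4⟩ := h
  have hmem : ρ ∈ W.seq i \ W.seq (i-1) := Finset.mem_sdiff.mpr ⟨h3, h4⟩
  rcases step_diff W h1 h2 with ⟨ν, _, hd⟩ | ⟨σ, τ, hfp, hd⟩
  · left; rw [hd] at hmem ⊢; rw [Finset.mem_singleton.mp hmem]
  · right
    refine ⟨σ, τ, hfp, hd, ?_⟩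
    rw [hd] at hmem
    simpa using hmem

lemma crit_not_lower {W : MorseSeq V} {Vee : Finset V → Finset (Finset V)}
    (hV : IsCorefMap W Vee) {ν : Finset V} (hc : W.Critical ν) (hl : W.LowerRegular ν) : False := by
  have h1 := hV.2.1 ν hc
  have h2 := (hV.2.2 ν hl).1
  rw [h1] at h2
  exact Finset.singleton_ne_empty ν h2

lemma crit_not_upper {W : MorseSeq V} {Λ : Finset V → Finset (Finset V)}
    (hΛ : IsRefMap W Λ) {ν : Finset V} (hc : W.Critical ν) (hu : W.UpperRegular ν) : False := by
  have h1 := hΛ.2.1 ν hc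
  have h2 := (hΛ.2.2 ν hu).1
  rw [h1] at h2
  exact Finset.singleton_ne_empty ν h2

lemma classify (W : MorseSeq V) {ρ : Finset V} (hρ : ρ ∈ W.cplx) :
    W.Critical ρ ∨ W.LowerRegular ρ ∨ W.UpperRegular ρ := by
  obtain ⟨i, ha⟩ := exists_addedAt W hρ
  rcases addedAt_cases W ha with hd | ⟨σ, τ, hfp, hd, hor⟩
  · exact Or.inl ⟨i, ha.1, ha.2.1, hd⟩
  · rcases hor with rfl | rfl
    · exact Or.inr (Or.inl ⟨τ, i, ha.1, ha.2.1, hfp.2.2.1, hd⟩)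
    · exact Or.inr (Or.inr ⟨σ, i, ha.1, ha.2.1, hfp.2.2.1, hd⟩)

end Dev2
section Dev3
variable {V : Type*} [DecidableEq V]

lemma card_between {K : Finset (Finset V)} (hK : IsComplex K) {σ ν : Finset V}
    (hν : ν ∈ K) (hσν : σ ⊆ ν) (hc : σ.card + 2 = ν.card) :
    (K.filter fun μ => σ ⊆ μ ∧ μ ⊆ ν ∧ σ.card + 1 = μ.card).card = 2 := by
  have himg : (K.filter fun μ => σ ⊆ μ ∧ μ ⊆ ν ∧ σ.card + 1 = μ.card)
      = (ν \ σ).image (fun x => insert x σ) := by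
    ext μ
    rw [Finset.mem_filter, Finset.mem_image]
    constructor
    · rintro ⟨hμK, hσμ, hμν, hcard⟩
      have hpos : 0 < (μ \ σ).card := by rw [Finset.card_sdiff_of_subset hσμ]; omega
      obtain ⟨x, hx⟩ := Finset.card_pos.mp hpos
      rw [Finset.mem_sdiff] at hx
      have hsub : insert x σ ⊆ μ := Finset.insert_subset hx.1 hσμ
      have hcard2 : (insert x σ).card = μ.card := by
        rw [Finset.card_insert_of_notMem hx.2]; omega
      refine ⟨x, Finset.mem_sdiff.mpr ⟨hμν hx.1, hx.2⟩, ?_⟩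
      exact Finset.eq_of_subset_of_card_le hsub (le_of_eq hcard2.symm)
    · rintro ⟨x, hx, rfl⟩
      rw [Finset.mem_sdiff] at hx
      have hsub : insert x σ ⊆ ν := Finset.insert_subset hx.1 hσν
      refine ⟨(hK ν hν).2 _ hsub ⟨x, Finset.mem_insert_self x σ⟩,
        Finset.subset_insert x σ, hsub, (Finset.card_insert_of_notMem hx.2).symm⟩
  rw [himg, Finset.card_image_of_injOn, Finset.card_sdiff_of_subset hσν]
  · omega
  · intro x hx y hy hxy
    rw [Finset.mem_coe, Finset.mem_sdiff] at hx hy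
    have hxy' : insert x σ = insert y σ := hxy
    have : x ∈ insert y σ := by rw [← hxy']; exact Finset.mem_insert_self x σ
    rcases Finset.mem_insert.mp this with h | h
    · exact h
    · exact absurd h hx.2

/-- δδ = 0 count: for σ, ν ∈ K, the number of μ ∈ δσ with ν ∈ δμ is even. -/
lemma even_cobd_cobd {K : Finset (Finset V)} (hK : IsComplex K) {σ ν : Finset V}
    (hν : ν ∈ K) :
    (((cobd K σ).filter fun μ => μ ⊆ ν ∧ μ.card + 1 = ν.card).card : ZMod 2) = 0 := by
  by_cases h : σ ⊆ ν ∧ σ.card + 2 = ν.card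
  · have : (cobd K σ).filter (fun μ => μ ⊆ ν ∧ μ.card + 1 = ν.card)
        = K.filter fun μ => σ ⊆ μ ∧ μ ⊆ ν ∧ σ.card + 1 = μ.card := by
      ext μ
      unfold cobd
      rw [Finset.filter_filter, Finset.mem_filter, Finset.mem_filter]
      constructor
      · rintro ⟨hμK, ⟨hσμ, hc1⟩, hμν, hc2⟩; exact ⟨hμK, hσμ, hμν, by omega⟩
      · rintro ⟨hμK, hσμ, hμν, hc1⟩; exact ⟨hμK, ⟨hσμ, by omega⟩, hμν, by omega⟩
    rw [this, card_between hK hν h.1 h.2]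
    decide
  · have : (cobd K σ).filter (fun μ => μ ⊆ ν ∧ μ.card + 1 = ν.card) = ∅ := by
      rw [Finset.filter_eq_empty_iff]
      rintro μ hμ ⟨hμν, hc⟩
      unfold cobd at hμ
      rw [Finset.mem_filter] at hμ
      exact h ⟨hμ.2.1.trans hμν, by omega⟩
    rw [this]; simp

/-- ∂∂ = 0 count: for τ ∈ K, ν ∈ K, the number of r ∈ ∂τ with ν ∈ ∂r is even. -/
lemma even_bd_bd {K : Finset (Finset V)} (hK : IsComplex K) {τ ν : Finset V}
    (hτ : τ ∈ K) (hν : ν ∈ K) :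
    (((bd τ).filter fun r => ν ∈ bd r).card : ZMod 2) = 0 := by
  by_cases h : ν ⊆ τ ∧ ν.card + 2 = τ.card
  · have : (bd τ).filter (fun r => ν ∈ bd r)
        = K.filter fun r => ν ⊆ r ∧ r ⊆ τ ∧ ν.card + 1 = r.card := by
      ext r
      unfold bd
      rw [Finset.filter_filter, Finset.mem_filter, Finset.mem_filter, Finset.mem_filter,
        Finset.mem_powerset, Finset.mem_powerset]
      constructor
      · rintro ⟨hrτ, ⟨hrne, hc1⟩, hνr, _, hc2⟩
        exact ⟨(hK τ hτ).2 r hrτ hrne, hνr, hrτ, by omega⟩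
      · rintro ⟨hrK, hνr, hrτ, hc1⟩
        exact ⟨hrτ, ⟨(hK r hrK).1, by omega⟩, hνr, (hK ν hν).1, by omega⟩
    rw [this, card_between hK hτ h.1 h.2]
    decide
  · have : (bd τ).filter (fun r => ν ∈ bd r) = ∅ := by
      rw [Finset.filter_eq_empty_iff]
      intro r hr hνr
      unfold bd at hr hνr
      rw [Finset.mem_filter, Finset.mem_powerset] at hr hνr
      exact h ⟨hνr.1.trans hr.1, by omega⟩
    rw [this]; simp

/-- the exchange of double sums between bd and cobd -/
lemma sum_exchange {K : Finset (Finset V)} (hK : IsComplex K)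
    (f : Finset V → Finset V → ZMod 2) :
    ∑ σ ∈ K, ∑ μ ∈ cobd K σ, f σ μ = ∑ μ ∈ K, ∑ σ ∈ bd μ, f σ μ := by
  have h1 : ∀ σ ∈ K, ∑ μ ∈ cobd K σ, f σ μ
      = ∑ μ ∈ K, if σ ⊆ μ ∧ σ.card + 1 = μ.card then f σ μ else 0 := by
    intro σ _
    rw [cobd, Finset.sum_filter]
  have h2 : ∀ μ ∈ K, ∑ σ ∈ bd μ, f σ μ
      = ∑ σ ∈ K, if σ ⊆ μ ∧ σ.card + 1 = μ.card then f σ μ else 0 := by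
    intro μ hμ
    rw [← Finset.sum_filter]
    congr 1
    ext σ
    unfold bd
    rw [Finset.mem_filter, Finset.mem_filter, Finset.mem_powerset]
    constructor
    · rintro ⟨hσμ, hne, hc⟩; exact ⟨(hK μ hμ).2 σ hσμ hne, ⟨hσμ, hc⟩⟩
    · rintro ⟨hσK, hσμ, hc⟩; exact ⟨hσμ, (hK σ hσK).1, hc⟩
  rw [Finset.sum_congr rfl h1, Finset.sum_congr rfl h2, Finset.sum_comm]

end Dev3
section Dev4
variable {V : Type*} [DecidableEq V]

/-- `φ(ρ) = ⟨∨(δρ), κ⟩` -/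
def phi (W : MorseSeq V) (Vee : Finset V → Finset (Finset V)) (κ ρ : Finset V) : ZMod 2 :=
  ∑ ν ∈ cobd W.cplx ρ, cf (Vee ν) κ

/-- `ψ(ρ) = ⟨∧(∂ρ), κ⟩` -/
def psi (W : MorseSeq V) (Λ : Finset V → Finset (Finset V)) (κ ρ : Finset V) : ZMod 2 :=
  ∑ ν ∈ bd ρ, cf (Λ ν) κ

lemma sum_phi_cobd (W : MorseSeq V) (Vee : Finset V → Finset (Finset V)) (κ σ : Finset V) :
    ∑ μ ∈ cobd W.cplx σ, phi W Vee κ μ = 0 := by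
  have hK : IsComplex W.cplx := W.cpx W.k le_rfl
  unfold phi
  have h1 : ∀ μ ∈ cobd W.cplx σ, ∑ ν ∈ cobd W.cplx μ, cf (Vee ν) κ
      = ∑ ν ∈ W.cplx, if μ ⊆ ν ∧ μ.card + 1 = ν.card then cf (Vee ν) κ else 0 := by
    intro μ _
    rw [cobd, Finset.sum_filter]
  rw [Finset.sum_congr rfl h1, Finset.sum_comm]
  refine Finset.sum_eq_zero fun ν hν => ?_
  rw [← Finset.sum_filter, Finset.sum_const, nsmul_eq_mul, even_cobd_cobd hK hν, zero_mul]

lemma sum_psi_bd (W : MorseSeq V) (Λ : Finset V → Finset (Finset V)) (κ : Finset V)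
    {τ : Finset V} (hτ : τ ∈ W.cplx) :
    ∑ r ∈ bd τ, psi W Λ κ r = 0 := by
  have hK : IsComplex W.cplx := W.cpx W.k le_rfl
  unfold psi
  have h1 : ∀ r ∈ bd τ, ∑ ν ∈ bd r, cf (Λ ν) κ
      = ∑ ν ∈ W.cplx, if ν ∈ bd r then cf (Λ ν) κ else 0 := by
    intro r hr
    have hr' := hr
    rw [bd, Finset.mem_filter, Finset.mem_powerset] at hr'
    have hrK : r ∈ W.cplx := (hK τ hτ).2 r hr'.1 hr'.2.1
    have hbd : bd r = W.cplx.filter (fun ν => ν ∈ bd r) := by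
      ext ν
      rw [Finset.mem_filter]
      constructor
      · intro hν
        refine ⟨?_, hν⟩
        rw [bd, Finset.mem_filter, Finset.mem_powerset] at hν
        exact (hK r hrK).2 ν hν.1 hν.2.1
      · exact fun h => h.2
    conv_lhs => rw [hbd]
    rw [Finset.sum_filter]
  rw [Finset.sum_congr rfl h1, Finset.sum_comm]
  refine Finset.sum_eq_zero fun ν hν => ?_
  rw [← Finset.sum_filter, Finset.sum_const, nsmul_eq_mul, even_bd_bd hK hτ hν, zero_mul]

/-- Key recursion: `φ(ρ) = ∑_{d ∈ ∨ρ} φ(d)`. -/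
lemma phi_rec {W : MorseSeq V} {Vee : Finset V → Finset (Finset V)}
    (hV : IsCorefMap W Vee) (κ : Finset V) :
    ∀ ρ ∈ W.cplx, phi W Vee κ ρ = ∑ d ∈ W.cplx, cf (Vee ρ) d * phi W Vee κ d := by
  suffices H : ∀ m i ρ, AddedAt W ρ i → W.k - i ≤ m →
      phi W Vee κ ρ = ∑ d ∈ W.cplx, cf (Vee ρ) d * phi W Vee κ d by
    intro ρ hρ
    obtain ⟨i, ha⟩ := exists_addedAt W hρ
    exact H (W.k - i) i ρ ha le_rfl
  intro m
  induction m using Nat.strong_induction_on with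
  | _ m ih =>
    intro i ρ ha hm
    obtain ⟨hi1, hik, hρi, hρpr⟩ := ha
    have hρK : ρ ∈ W.cplx := seq_mono W hik le_rfl hρi
    rcases addedAt_cases W ⟨hi1, hik, hρi, hρpr⟩ with hd | ⟨σ, τ, hfp, hd, hor⟩
    · -- critical
      have hcrit : W.Critical ρ := ⟨i, hi1, hik, hd⟩
      rw [hV.2.1 ρ hcrit]
      have : ∑ d ∈ W.cplx, cf ({ρ} : Finset (Finset V)) d * phi W Vee κ d
          = phi W Vee κ ρ := by
        rw [Finset.sum_eq_single ρ (fun d _ hd => by rw [cf_singleton, if_neg hd, zero_mul])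
          (fun h => absurd hρK h), cf_singleton, if_pos rfl, one_mul]
      rw [this]
    · rcases hor with rfl | rfl
      · -- lower regular
        have hlr : W.LowerRegular ρ := ⟨τ, i, hi1, hik, hfp.2.2.1, hd⟩
        have h1 : phi W Vee κ ρ = 0 := by
          show (∑ ν ∈ cobd W.cplx ρ, cf (Vee ν) κ) = 0
          rw [← cf_chainSum, (hV.2.2 ρ hlr).2]
          exact cf_empty κ
        rw [h1, (hV.2.2 ρ hlr).1]
        simp
      · -- upper regular : ρ = τ, partner σ
        have hlr : W.LowerRegular σ := ⟨ρ, i, hi1, hik, hfp.2.2.1, hd⟩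
        have hz : ∀ d, ∑ μ ∈ cobd W.cplx σ, cf (Vee μ) d = 0 := fun d => by
          rw [← cf_chainSum, (hV.2.2 σ hlr).2]
          exact cf_empty d
        have hcard : σ.card + 1 = ρ.card := freePair_card (W.cpx i hik) hfp
        have hmem : ρ ∈ cobd W.cplx σ :=
          Finset.mem_filter.mpr ⟨hρK, hfp.2.2.1.subset, hcard⟩
        have hcf : ∀ d, cf (Vee ρ) d = ∑ μ ∈ (cobd W.cplx σ).erase ρ, cf (Vee μ) d := by
          intro d
          have h := Finset.sum_erase_add (cobd W.cplx σ) (fun μ => cf (Vee μ) d) hmem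
          rw [hz d] at h
          have h2 := eq_neg_of_add_eq_zero_right h
          rw [CharTwo.neg_eq] at h2
          exact h2
        have hIH : ∀ μ ∈ (cobd W.cplx σ).erase ρ,
            phi W Vee κ μ = ∑ d ∈ W.cplx, cf (Vee μ) d * phi W Vee κ d := by
          intro μ hμ
          have hμne : μ ≠ ρ := (Finset.mem_erase.mp hμ).1
          have hμc := (Finset.mem_erase.mp hμ).2
          rw [cobd, Finset.mem_filter] at hμc
          have hμK : μ ∈ W.cplx := hμc.1
          have hss : σ ⊂ μ := hμc.2.1.ssubset_of_ne
            (fun h => by rw [← h] at hμc; exact absurd hμc.2.2 (by omega))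
          have hμnoti : μ ∉ W.seq i := fun hin => hμne (hfp.2.2.2 μ hin hss)
          obtain ⟨j, haj⟩ := exists_addedAt W hμK
          have hij : i < j := by
            by_contra hle
            exact hμnoti (seq_mono W (by omega) hik haj.2.2.1)
          have hjk : j ≤ W.k := haj.2.1
          exact ih (W.k - j) (by omega) j μ haj le_rfl
        calc phi W Vee κ ρ
            = ∑ μ ∈ (cobd W.cplx σ).erase ρ, phi W Vee κ μ := by
              have h := Finset.sum_erase_add (cobd W.cplx σ) (phi W Vee κ) hmem
              rw [sum_phi_cobd W Vee κ σ] at h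
              have h2 := eq_neg_of_add_eq_zero_right h
              rw [CharTwo.neg_eq] at h2
              exact h2
          _ = ∑ μ ∈ (cobd W.cplx σ).erase ρ, ∑ d ∈ W.cplx, cf (Vee μ) d * phi W Vee κ d :=
              Finset.sum_congr rfl hIH
          _ = ∑ d ∈ W.cplx, ∑ μ ∈ (cobd W.cplx σ).erase ρ, cf (Vee μ) d * phi W Vee κ d :=
              Finset.sum_comm
          _ = ∑ d ∈ W.cplx, cf (Vee ρ) d * phi W Vee κ d := by
              refine Finset.sum_congr rfl fun d _ => ?_
              rw [hcf d, Finset.sum_mul]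

/-- Key recursion: `ψ(ρ) = ∑_{d ∈ ∧ρ} ψ(d)`. -/
lemma psi_rec {W : MorseSeq V} {Λ : Finset V → Finset (Finset V)}
    (hΛ : IsRefMap W Λ) (κ : Finset V) :
    ∀ ρ ∈ W.cplx, psi W Λ κ ρ = ∑ d ∈ W.cplx, cf (Λ ρ) d * psi W Λ κ d := by
  suffices H : ∀ i ρ, AddedAt W ρ i →
      psi W Λ κ ρ = ∑ d ∈ W.cplx, cf (Λ ρ) d * psi W Λ κ d by
    intro ρ hρ
    obtain ⟨i, ha⟩ := exists_addedAt W hρ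
    exact H i ρ ha
  intro i
  induction i using Nat.strong_induction_on with
  | _ i ih =>
    intro ρ ha
    obtain ⟨hi1, hik, hρi, hρpr⟩ := ha
    have hρK : ρ ∈ W.cplx := seq_mono W hik le_rfl hρi
    rcases addedAt_cases W ⟨hi1, hik, hρi, hρpr⟩ with hd | ⟨σ, τ, hfp, hd, hor⟩
    · -- critical
      have hcrit : W.Critical ρ := ⟨i, hi1, hik, hd⟩
      rw [hΛ.2.1 ρ hcrit]
      have : ∑ d ∈ W.cplx, cf ({ρ} : Finset (Finset V)) d * psi W Λ κ d
          = psi W Λ κ ρ := by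
        rw [Finset.sum_eq_single ρ (fun d _ hd => by rw [cf_singleton, if_neg hd, zero_mul])
          (fun h => absurd hρK h), cf_singleton, if_pos rfl, one_mul]
      rw [this]
    · rcases hor with rfl | rfl
      · -- lower regular : ρ = σ, partner τ
        have hur : W.UpperRegular τ := ⟨ρ, i, hi1, hik, hfp.2.2.1, hd⟩
        have hτi : τ ∈ W.seq i := hfp.2.1
        have hτK : τ ∈ W.cplx := seq_mono W hik le_rfl hτi
        have hz : ∀ d, ∑ r ∈ bd τ, cf (Λ r) d = 0 := fun d => by
          rw [← cf_chainSum, (hΛ.2.2 τ hur).2]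
          exact cf_empty d
        have hcard : ρ.card + 1 = τ.card := freePair_card (W.cpx i hik) hfp
        have hρbd : ρ ∈ bd τ := by
          rw [bd, Finset.mem_filter, Finset.mem_powerset]
          exact ⟨hfp.2.2.1.subset, ((W.cpx i hik) ρ hfp.1).1, hcard⟩
        have hcf : ∀ d, cf (Λ ρ) d = ∑ r ∈ (bd τ).erase ρ, cf (Λ r) d := by
          intro d
          have h := Finset.sum_erase_add (bd τ) (fun r => cf (Λ r) d) hρbd
          rw [hz d] at h
          have h2 := eq_neg_of_add_eq_zero_right h
          rw [CharTwo.neg_eq] at h2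
          exact h2
        have hIH : ∀ r ∈ (bd τ).erase ρ,
            psi W Λ κ r = ∑ d ∈ W.cplx, cf (Λ r) d * psi W Λ κ d := by
          intro r hr
          have hrne : r ≠ ρ := (Finset.mem_erase.mp hr).1
          have hrbd := (Finset.mem_erase.mp hr).2
          rw [bd, Finset.mem_filter, Finset.mem_powerset] at hrbd
          have hri : r ∈ W.seq i := ((W.cpx i hik) τ hτi).2 r hrbd.1 hrbd.2.1
          have hrneτ : r ≠ τ := fun h => by
            rw [h] at hrbd
            exact absurd hrbd.2.2 (by omega)
          have hrprev : r ∈ W.seq (i-1) := by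
            by_contra hno
            have hmem : r ∈ W.seq i \ W.seq (i-1) := Finset.mem_sdiff.mpr ⟨hri, hno⟩
            rw [hd] at hmem
            rcases Finset.mem_insert.mp hmem with h | h
            · exact hrne h
            · exact hrneτ (Finset.mem_singleton.mp h)
          obtain ⟨j, hj, haj⟩ := exists_addedAt_aux W (i-1) (by omega) r hrprev
          exact ih j (by omega) r haj
        calc psi W Λ κ ρ
            = ∑ r ∈ (bd τ).erase ρ, psi W Λ κ r := by
              have h := Finset.sum_erase_add (bd τ) (psi W Λ κ) hρbd
              rw [sum_psi_bd W Λ κ hτK] at h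
              have h2 := eq_neg_of_add_eq_zero_right h
              rw [CharTwo.neg_eq] at h2
              exact h2
          _ = ∑ r ∈ (bd τ).erase ρ, ∑ d ∈ W.cplx, cf (Λ r) d * psi W Λ κ d :=
              Finset.sum_congr rfl hIH
          _ = ∑ d ∈ W.cplx, ∑ r ∈ (bd τ).erase ρ, cf (Λ r) d * psi W Λ κ d :=
              Finset.sum_comm
          _ = ∑ d ∈ W.cplx, cf (Λ ρ) d * psi W Λ κ d := by
              refine Finset.sum_congr rfl fun d _ => ?_
              rw [hcf d, Finset.sum_mul]
      · -- upper regular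
        have hur : W.UpperRegular ρ := ⟨σ, i, hi1, hik, hfp.2.2.1, hd⟩
        have h1 : psi W Λ κ ρ = 0 := by
          show (∑ ν ∈ bd ρ, cf (Λ ν) κ) = 0
          rw [← cf_chainSum, (hΛ.2.2 ρ hur).2]
          exact cf_empty κ
        rw [h1, (hΛ.2.2 ρ hur).1]
        simp

end Dev4
section Dev5
variable {V : Type*} [DecidableEq V]

lemma sum_exchange' {K : Finset (Finset V)} (hK : IsComplex K)
    (f : Finset V → Finset V → ZMod 2) :
    ∑ σ ∈ K, ∑ ν ∈ bd σ, f σ ν = ∑ ν ∈ K, ∑ σ ∈ cobd K ν, f σ ν :=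
  (sum_exchange hK (fun a b => f b a)).symm

lemma main1 {W : MorseSeq V} {Λ Vee : Finset V → Finset (Finset V)}
    (hΛ : IsRefMap W Λ) (hV : IsCorefMap W Vee) {κ ρ : Finset V}
    (hκ : W.Critical κ) (hρ : ρ ∈ W.cplx) :
    phi W Vee κ ρ = ∑ d ∈ W.cplx, (∑ r ∈ bd κ, cf (Λ r) d) * cf (Vee ρ) d := by
  have hK : IsComplex W.cplx := W.cpx W.k le_rfl
  have hκK : κ ∈ W.cplx := critical_mem W hκ
  have hA : ∑ σ ∈ W.cplx, (∑ d ∈ W.cplx, cf (Λ σ) d * cf (Vee ρ) d) * phi W Vee κ σ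
      = phi W Vee κ ρ := by
    have hstep : ∀ σ ∈ W.cplx, (∑ d ∈ W.cplx, cf (Λ σ) d * cf (Vee ρ) d) * phi W Vee κ σ
        = cf (Vee ρ) σ * phi W Vee κ σ := by
      intro σ hσ
      rcases classify W hσ with hcrit | hlow | hup
      · rw [hΛ.2.1 σ hcrit]
        congr 1
        rw [Finset.sum_eq_single σ (fun d _ hdσ => by rw [cf_singleton, if_neg hdσ, zero_mul])
          (fun h => absurd hσ h), cf_singleton, if_pos rfl, one_mul]
      · have h0 : phi W Vee κ σ = 0 := by
          show (∑ ν ∈ cobd W.cplx σ, cf (Vee ν) κ) = 0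
          rw [← cf_chainSum, (hV.2.2 σ hlow).2]
          exact cf_empty κ
        rw [h0, mul_zero, mul_zero]
      · have h1 : (∑ d ∈ W.cplx, cf (Λ σ) d * cf (Vee ρ) d) = 0 := by
          rw [(hΛ.2.2 σ hup).1]
          simp
        rw [h1, zero_mul]
        by_cases hmem : σ ∈ Vee ρ
        · exact (crit_not_upper hΛ (hV.1 ρ hρ σ hmem).1 hup).elim
        · rw [cf, if_neg hmem, zero_mul]
    rw [Finset.sum_congr rfl hstep]
    exact (phi_rec hV κ ρ hρ).symm
  have hB : ∑ σ ∈ W.cplx, (∑ d ∈ W.cplx, cf (Λ σ) d * cf (Vee ρ) d) * phi W Vee κ σ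
      = ∑ d ∈ W.cplx, (∑ r ∈ bd κ, cf (Λ r) d) * cf (Vee ρ) d := by
    have h1 : ∀ σ ∈ W.cplx, (∑ d ∈ W.cplx, cf (Λ σ) d * cf (Vee ρ) d) * phi W Vee κ σ
        = ∑ μ ∈ cobd W.cplx σ, (∑ d ∈ W.cplx, cf (Λ σ) d * cf (Vee ρ) d) * cf (Vee μ) κ := by
      intro σ _
      rw [phi, Finset.mul_sum]
    rw [Finset.sum_congr rfl h1,
      sum_exchange hK (fun σ μ => (∑ d ∈ W.cplx, cf (Λ σ) d * cf (Vee ρ) d) * cf (Vee μ) κ)]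
    rw [Finset.sum_eq_single κ]
    · have hcfκ : cf (Vee κ) κ = 1 := by
        rw [hV.2.1 κ hκ, cf_singleton, if_pos rfl]
      calc ∑ σ ∈ bd κ, (∑ d ∈ W.cplx, cf (Λ σ) d * cf (Vee ρ) d) * cf (Vee κ) κ
          = ∑ σ ∈ bd κ, ∑ d ∈ W.cplx, cf (Λ σ) d * cf (Vee ρ) d := by
            refine Finset.sum_congr rfl fun σ _ => ?_
            rw [hcfκ, mul_one]
        _ = ∑ d ∈ W.cplx, ∑ σ ∈ bd κ, cf (Λ σ) d * cf (Vee ρ) d := Finset.sum_comm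
        _ = ∑ d ∈ W.cplx, (∑ r ∈ bd κ, cf (Λ r) d) * cf (Vee ρ) d := by
            refine Finset.sum_congr rfl fun d _ => ?_
            rw [Finset.sum_mul]
    · intro μ hμ hμκ
      rcases classify W hμ with hcrit | hlow | hup
      · have : cf (Vee μ) κ = 0 := by
          rw [hV.2.1 μ hcrit, cf_singleton, if_neg (fun h => hμκ h.symm)]
        rw [this]
        exact Finset.sum_eq_zero fun σ _ => mul_zero _
      · have : cf (Vee μ) κ = 0 := by rw [(hV.2.2 μ hlow).1]; rfl
        rw [this]
        exact Finset.sum_eq_zero fun σ _ => mul_zero _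
      · have hz : ∀ d, ∑ σ ∈ bd μ, cf (Λ σ) d = 0 := fun d => by
          rw [← cf_chainSum, (hΛ.2.2 μ hup).2]
          exact cf_empty d
        calc ∑ σ ∈ bd μ, (∑ d ∈ W.cplx, cf (Λ σ) d * cf (Vee ρ) d) * cf (Vee μ) κ
            = ∑ σ ∈ bd μ, ∑ d ∈ W.cplx, cf (Λ σ) d * (cf (Vee ρ) d * cf (Vee μ) κ) := by
              refine Finset.sum_congr rfl fun σ _ => ?_
              rw [Finset.sum_mul]
              exact Finset.sum_congr rfl fun d _ => by ring
          _ = ∑ d ∈ W.cplx, ∑ σ ∈ bd μ, cf (Λ σ) d * (cf (Vee ρ) d * cf (Vee μ) κ) :=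
              Finset.sum_comm
          _ = 0 := Finset.sum_eq_zero fun d _ => by rw [← Finset.sum_mul, hz d, zero_mul]
    · intro h
      exact absurd hκK h
  rw [← hA, hB]

lemma main2 {W : MorseSeq V} {Λ Vee : Finset V → Finset (Finset V)}
    (hΛ : IsRefMap W Λ) (hV : IsCorefMap W Vee) {κ ρ : Finset V}
    (hκ : W.Critical κ) (hρ : ρ ∈ W.cplx) :
    psi W Λ κ ρ = ∑ d ∈ W.cplx, (∑ m ∈ cobd W.cplx κ, cf (Vee m) d) * cf (Λ ρ) d := by
  have hK : IsComplex W.cplx := W.cpx W.k le_rfl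
  have hκK : κ ∈ W.cplx := critical_mem W hκ
  have hA : ∑ σ ∈ W.cplx, (∑ d ∈ W.cplx, cf (Vee σ) d * cf (Λ ρ) d) * psi W Λ κ σ
      = psi W Λ κ ρ := by
    have hstep : ∀ σ ∈ W.cplx, (∑ d ∈ W.cplx, cf (Vee σ) d * cf (Λ ρ) d) * psi W Λ κ σ
        = cf (Λ ρ) σ * psi W Λ κ σ := by
      intro σ hσ
      rcases classify W hσ with hcrit | hlow | hup
      · rw [hV.2.1 σ hcrit]
        congr 1
        rw [Finset.sum_eq_single σ (fun d _ hdσ => by rw [cf_singleton, if_neg hdσ, zero_mul])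
          (fun h => absurd hσ h), cf_singleton, if_pos rfl, one_mul]
      · have h1 : (∑ d ∈ W.cplx, cf (Vee σ) d * cf (Λ ρ) d) = 0 := by
          rw [(hV.2.2 σ hlow).1]
          simp
        rw [h1, zero_mul]
        by_cases hmem : σ ∈ Λ ρ
        · exact (crit_not_lower hV (hΛ.1 ρ hρ σ hmem).1 hlow).elim
        · rw [cf, if_neg hmem, zero_mul]
      · have h0 : psi W Λ κ σ = 0 := by
          show (∑ ν ∈ bd σ, cf (Λ ν) κ) = 0
          rw [← cf_chainSum, (hΛ.2.2 σ hup).2]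
          exact cf_empty κ
        rw [h0, mul_zero, mul_zero]
    rw [Finset.sum_congr rfl hstep]
    exact (psi_rec hΛ κ ρ hρ).symm
  have hB : ∑ σ ∈ W.cplx, (∑ d ∈ W.cplx, cf (Vee σ) d * cf (Λ ρ) d) * psi W Λ κ σ
      = ∑ d ∈ W.cplx, (∑ m ∈ cobd W.cplx κ, cf (Vee m) d) * cf (Λ ρ) d := by
    have h1 : ∀ σ ∈ W.cplx, (∑ d ∈ W.cplx, cf (Vee σ) d * cf (Λ ρ) d) * psi W Λ κ σ
        = ∑ ν ∈ bd σ, (∑ d ∈ W.cplx, cf (Vee σ) d * cf (Λ ρ) d) * cf (Λ ν) κ := by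
      intro σ _
      rw [psi, Finset.mul_sum]
    rw [Finset.sum_congr rfl h1,
      sum_exchange' hK (fun σ ν => (∑ d ∈ W.cplx, cf (Vee σ) d * cf (Λ ρ) d) * cf (Λ ν) κ)]
    rw [Finset.sum_eq_single κ]
    · have hcfκ : cf (Λ κ) κ = 1 := by
        rw [hΛ.2.1 κ hκ, cf_singleton, if_pos rfl]
      calc ∑ σ ∈ cobd W.cplx κ, (∑ d ∈ W.cplx, cf (Vee σ) d * cf (Λ ρ) d) * cf (Λ κ) κ
          = ∑ σ ∈ cobd W.cplx κ, ∑ d ∈ W.cplx, cf (Vee σ) d * cf (Λ ρ) d := by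
            refine Finset.sum_congr rfl fun σ _ => ?_
            rw [hcfκ, mul_one]
        _ = ∑ d ∈ W.cplx, ∑ σ ∈ cobd W.cplx κ, cf (Vee σ) d * cf (Λ ρ) d := Finset.sum_comm
        _ = ∑ d ∈ W.cplx, (∑ m ∈ cobd W.cplx κ, cf (Vee m) d) * cf (Λ ρ) d := by
            refine Finset.sum_congr rfl fun d _ => ?_
            rw [Finset.sum_mul]
    · intro ν hν hνκ
      rcases classify W hν with hcrit | hlow | hup
      · have : cf (Λ ν) κ = 0 := by
          rw [hΛ.2.1 ν hcrit, cf_singleton, if_neg (fun h => hνκ h.symm)]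
        rw [this]
        exact Finset.sum_eq_zero fun σ _ => mul_zero _
      · have hz : ∀ d, ∑ σ ∈ cobd W.cplx ν, cf (Vee σ) d = 0 := fun d => by
          rw [← cf_chainSum, (hV.2.2 ν hlow).2]
          exact cf_empty d
        calc ∑ σ ∈ cobd W.cplx ν, (∑ d ∈ W.cplx, cf (Vee σ) d * cf (Λ ρ) d) * cf (Λ ν) κ
            = ∑ σ ∈ cobd W.cplx ν, ∑ d ∈ W.cplx, cf (Vee σ) d * (cf (Λ ρ) d * cf (Λ ν) κ) := by
              refine Finset.sum_congr rfl fun σ _ => ?_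
              rw [Finset.sum_mul]
              exact Finset.sum_congr rfl fun d _ => by ring
          _ = ∑ d ∈ W.cplx, ∑ σ ∈ cobd W.cplx ν, cf (Vee σ) d * (cf (Λ ρ) d * cf (Λ ν) κ) :=
              Finset.sum_comm
          _ = 0 := Finset.sum_eq_zero fun d _ => by rw [← Finset.sum_mul, hz d, zero_mul]
      · have : cf (Λ ν) κ = 0 := by rw [(hΛ.2.2 ν hup).1]; rfl
        rw [this]
        exact Finset.sum_eq_zero fun σ _ => mul_zero _
    · intro h
      exact absurd hκK h
  rw [← hA, hB]

end Dev5
section Dev6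
variable {V : Type*} [DecidableEq V]

lemma cf_extMap {W : MorseSeq V} (Vee : Finset V → Finset (Finset V)) {ν : Finset V}
    (hν : ν ∈ W.cplx) (κ : Finset V) : cf (extMap W Vee κ) ν = cf (Vee ν) κ := by
  unfold extMap cf
  simp [Finset.mem_filter, hν]

lemma cf_coextMap {W : MorseSeq V} (Λ : Finset V → Finset (Finset V)) {ν : Finset V}
    (hν : ν ∈ W.cplx) (κ : Finset V) : cf (coextMap W Λ κ) ν = cf (Λ ν) κ := by
  unfold coextMap cf
  simp [Finset.mem_filter, hν]

lemma perk1 {W : MorseSeq V} {Λ Vee : Finset V → Finset (Finset V)}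
    (hΛ : IsRefMap W Λ) (hV : IsCorefMap W Vee) {κ : Finset V}
    (hκ : W.Critical κ) (ρ : Finset V) :
    ∑ ν ∈ W.cplx, cf (extMap W Vee κ) ν * cf (bd ν) ρ
      = ∑ d ∈ W.cplx, cf (chainSum (bd κ) Λ) d * cf (extMap W Vee d) ρ := by
  have hK : IsComplex W.cplx := W.cpx W.k le_rfl
  by_cases hρ : ρ ∈ W.cplx
  · have hL : ∑ ν ∈ W.cplx, cf (extMap W Vee κ) ν * cf (bd ν) ρ = phi W Vee κ ρ := by
      calc ∑ ν ∈ W.cplx, cf (extMap W Vee κ) ν * cf (bd ν) ρ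
          = ∑ ν ∈ W.cplx, if ρ ∈ bd ν then cf (Vee ν) κ else 0 := by
            refine Finset.sum_congr rfl fun ν hν => ?_
            rw [cf_extMap Vee hν κ]
            unfold cf
            by_cases h : ρ ∈ bd ν
            · rw [if_pos h, if_pos h, mul_one]
            · rw [if_neg h, if_neg h, mul_zero]
        _ = ∑ ν ∈ W.cplx.filter (fun ν => ρ ∈ bd ν), cf (Vee ν) κ :=
            (Finset.sum_filter _ _).symm
        _ = phi W Vee κ ρ := by
            unfold phi
            congr 1
            ext ν
            rw [Finset.mem_filter, cobd, Finset.mem_filter]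
            constructor
            · rintro ⟨hνK, hb⟩
              rw [bd, Finset.mem_filter, Finset.mem_powerset] at hb
              exact ⟨hνK, hb.1, hb.2.2⟩
            · rintro ⟨hνK, hsub, hcard⟩
              refine ⟨hνK, ?_⟩
              rw [bd, Finset.mem_filter, Finset.mem_powerset]
              exact ⟨hsub, (hK ρ hρ).1, hcard⟩
    have hR : ∑ d ∈ W.cplx, cf (chainSum (bd κ) Λ) d * cf (extMap W Vee d) ρ
        = ∑ d ∈ W.cplx, (∑ r ∈ bd κ, cf (Λ r) d) * cf (Vee ρ) d := by
      refine Finset.sum_congr rfl fun d _ => ?_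
      rw [cf_chainSum, cf_extMap Vee hρ d]
    rw [hL, hR]
    exact main1 hΛ hV hκ hρ
  · have hL0 : ∑ ν ∈ W.cplx, cf (extMap W Vee κ) ν * cf (bd ν) ρ = 0 := by
      refine Finset.sum_eq_zero fun ν hν => ?_
      have hnb : ρ ∉ bd ν := by
        intro hb
        rw [bd, Finset.mem_filter, Finset.mem_powerset] at hb
        exact hρ ((hK ν hν).2 ρ hb.1 hb.2.1)
      have h0 : cf (bd ν) ρ = 0 := if_neg hnb
      rw [h0, mul_zero]
    have hR0 : ∑ d ∈ W.cplx, cf (chainSum (bd κ) Λ) d * cf (extMap W Vee d) ρ = 0 := by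
      refine Finset.sum_eq_zero fun d _ => ?_
      have h0 : cf (extMap W Vee d) ρ = 0 :=
        if_neg (fun hm => hρ (Finset.mem_filter.mp hm).1)
      rw [h0, mul_zero]
    rw [hL0, hR0]

lemma perk2 {W : MorseSeq V} {Λ Vee : Finset V → Finset (Finset V)}
    (hΛ : IsRefMap W Λ) (hV : IsCorefMap W Vee) {κ : Finset V}
    (hκ : W.Critical κ) (ρ : Finset V) :
    ∑ ν ∈ W.cplx, cf (coextMap W Λ κ) ν * cf (cobd W.cplx ν) ρ
      = ∑ d ∈ W.cplx, cf (chainSum (cobd W.cplx κ) Vee) d * cf (coextMap W Λ d) ρ := by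
  have hK : IsComplex W.cplx := W.cpx W.k le_rfl
  by_cases hρ : ρ ∈ W.cplx
  · have hL : ∑ ν ∈ W.cplx, cf (coextMap W Λ κ) ν * cf (cobd W.cplx ν) ρ = psi W Λ κ ρ := by
      calc ∑ ν ∈ W.cplx, cf (coextMap W Λ κ) ν * cf (cobd W.cplx ν) ρ
          = ∑ ν ∈ W.cplx, if ρ ∈ cobd W.cplx ν then cf (Λ ν) κ else 0 := by
            refine Finset.sum_congr rfl fun ν hν => ?_
            rw [cf_coextMap Λ hν κ]
            unfold cf
            by_cases h : ρ ∈ cobd W.cplx ν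
            · rw [if_pos h, if_pos h, mul_one]
            · rw [if_neg h, if_neg h, mul_zero]
        _ = ∑ ν ∈ W.cplx.filter (fun ν => ρ ∈ cobd W.cplx ν), cf (Λ ν) κ :=
            (Finset.sum_filter _ _).symm
        _ = psi W Λ κ ρ := by
            unfold psi
            congr 1
            ext ν
            rw [Finset.mem_filter, bd, Finset.mem_filter, Finset.mem_powerset]
            constructor
            · rintro ⟨hνK, hb⟩
              rw [cobd, Finset.mem_filter] at hb
              exact ⟨hb.2.1, (hK ν hνK).1, hb.2.2⟩
            · rintro ⟨hsub, hne, hcard⟩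
              have hνK : ν ∈ W.cplx := (hK ρ hρ).2 ν hsub hne
              refine ⟨hνK, ?_⟩
              rw [cobd, Finset.mem_filter]
              exact ⟨hρ, hsub, hcard⟩
    have hR : ∑ d ∈ W.cplx, cf (chainSum (cobd W.cplx κ) Vee) d * cf (coextMap W Λ d) ρ
        = ∑ d ∈ W.cplx, (∑ m ∈ cobd W.cplx κ, cf (Vee m) d) * cf (Λ ρ) d := by
      refine Finset.sum_congr rfl fun d _ => ?_
      rw [cf_chainSum, cf_coextMap Λ hρ d]
    rw [hL, hR]
    exact main2 hΛ hV hκ hρ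
  · have hL0 : ∑ ν ∈ W.cplx, cf (coextMap W Λ κ) ν * cf (cobd W.cplx ν) ρ = 0 := by
      refine Finset.sum_eq_zero fun ν hν => ?_
      have hnb : ρ ∉ cobd W.cplx ν := fun hm => hρ (Finset.mem_filter.mp hm).1
      have h0 : cf (cobd W.cplx ν) ρ = 0 := if_neg hnb
      rw [h0, mul_zero]
    have hR0 : ∑ d ∈ W.cplx, cf (chainSum (cobd W.cplx κ) Vee) d * cf (coextMap W Λ d) ρ
        = 0 := by
      refine Finset.sum_eq_zero fun d _ => ?_
      have h0 : cf (coextMap W Λ d) ρ = 0 :=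
        if_neg (fun hm => hρ (Finset.mem_filter.mp hm).1)
      rw [h0, mul_zero]
    rw [hL0, hR0]

end Dev6


/-- `∂_p ∘ ∧̃_p = ∧̃_{p-1} ∘ ∂̂_p` and `δ_p ∘ ∨̃_p = ∨̃_{p+1} ∘ δ̂_p` :
the extension map is a chain map and the coextension map is a cochain map. -/
theorem extension_is_chain_map (W : MorseSeq V)
    (Λ Vee : Finset V → Finset (Finset V))
    (hΛ : IsRefMap W Λ) (hV : IsCorefMap W Vee)
    (p : ℕ) (c : Finset (Finset V)) (hc : IsCritChain W p c) :
    chainSum (chainSum c (extMap W Vee)) bd =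
      chainSum (chainSum c (fun ν => chainSum (bd ν) Λ)) (extMap W Vee) ∧
    chainSum (chainSum c (coextMap W Λ)) (cobd W.cplx) =
      chainSum (chainSum c (fun ν => chainSum (cobd W.cplx ν) Vee)) (coextMap W Λ) := by
  have hK : IsComplex W.cplx := W.cpx W.k le_rfl
  constructor
  · apply eq_of_cf
    intro ρ
    rw [cf_chainSum, cf_chainSum]
    have hsub1 : chainSum c (extMap W Vee) ⊆ W.cplx := by
      intro x hx
      unfold chainSum at hx
      obtain ⟨κ', hκ', hxm⟩ := Finset.mem_biUnion.mp (Finset.mem_filter.mp hx).1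
      exact (Finset.mem_filter.mp hxm).1
    have hsub2 : chainSum c (fun ν => chainSum (bd ν) Λ) ⊆ W.cplx := by
      intro x hx
      unfold chainSum at hx
      obtain ⟨κ', hκ', hxm⟩ := Finset.mem_biUnion.mp (Finset.mem_filter.mp hx).1
      obtain ⟨r, hr, hxΛ⟩ := Finset.mem_biUnion.mp (Finset.mem_filter.mp hxm).1
      have hκK : κ' ∈ W.cplx := critical_mem W (hc κ' hκ').1
      have hrK : r ∈ W.cplx := by
        rw [bd, Finset.mem_filter, Finset.mem_powerset] at hr
        exact (hK κ' hκK).2 r hr.1 hr.2.1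
      exact critical_mem W (hΛ.1 r hrK x hxΛ).1
    rw [sum_subset_cf hsub1, sum_subset_cf hsub2]
    have hLc : ∀ ν ∈ W.cplx, cf (chainSum c (extMap W Vee)) ν * cf (bd ν) ρ
        = ∑ κ ∈ c, cf (extMap W Vee κ) ν * cf (bd ν) ρ := fun ν _ => by
      rw [cf_chainSum, Finset.sum_mul]
    have hRc : ∀ d ∈ W.cplx, cf (chainSum c (fun ν => chainSum (bd ν) Λ)) d
          * cf (extMap W Vee d) ρ
        = ∑ κ ∈ c, cf (chainSum (bd κ) Λ) d * cf (extMap W Vee d) ρ := fun d _ => by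
      rw [cf_chainSum, Finset.sum_mul]
    rw [Finset.sum_congr rfl hLc, Finset.sum_congr rfl hRc]
    conv_lhs => rw [Finset.sum_comm]
    conv_rhs => rw [Finset.sum_comm]
    exact Finset.sum_congr rfl fun κ hκc => perk1 hΛ hV (hc κ hκc).1 ρ
  · apply eq_of_cf
    intro ρ
    rw [cf_chainSum, cf_chainSum]
    have hsub1 : chainSum c (coextMap W Λ) ⊆ W.cplx := by
      intro x hx
      unfold chainSum at hx
      obtain ⟨κ', hκ', hxm⟩ := Finset.mem_biUnion.mp (Finset.mem_filter.mp hx).1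
      exact (Finset.mem_filter.mp hxm).1
    have hsub2 : chainSum c (fun ν => chainSum (cobd W.cplx ν) Vee) ⊆ W.cplx := by
      intro x hx
      unfold chainSum at hx
      obtain ⟨κ', hκ', hxm⟩ := Finset.mem_biUnion.mp (Finset.mem_filter.mp hx).1
      obtain ⟨m, hm, hxV⟩ := Finset.mem_biUnion.mp (Finset.mem_filter.mp hxm).1
      have hmK : m ∈ W.cplx := (Finset.mem_filter.mp hm).1
      exact critical_mem W (hV.1 m hmK x hxV).1
    rw [sum_subset_cf hsub1, sum_subset_cf hsub2]
    have hLc : ∀ ν ∈ W.cplx, cf (chainSum c (coextMap W Λ)) ν * cf (cobd W.cplx ν) ρ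
        = ∑ κ ∈ c, cf (coextMap W Λ κ) ν * cf (cobd W.cplx ν) ρ := fun ν _ => by
      rw [cf_chainSum, Finset.sum_mul]
    have hRc : ∀ d ∈ W.cplx, cf (chainSum c (fun ν => chainSum (cobd W.cplx ν) Vee)) d
          * cf (coextMap W Λ d) ρ
        = ∑ κ ∈ c, cf (chainSum (cobd W.cplx κ) Vee) d * cf (coextMap W Λ d) ρ := fun d _ => by
      rw [cf_chainSum, Finset.sum_mul]
    rw [Finset.sum_congr rfl hLc, Finset.sum_congr rfl hRc]
    conv_lhs => rw [Finset.sum_comm]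
    conv_rhs => rw [Finset.sum_comm]
    exact Finset.sum_congr rfl fun κ hκc => perk2 hΛ hV (hc κ hκc).1 ρ
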